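/- arXiv:1507.08041 — 2 statements merged into one kernel-verified Lean document; each statement's English description precedes it below -/
import Mathlib

section
/- For any integer t ≥ 0 and real s ≥ 1, define f_k(x | s, t) = k (kx)^{−kx − 1/2} (ks)^{−kx/2} e^{−kx/2} (kx + t)^{(3kx)/2 + (3t)/2 + 1/2} (1 − (kx+t)/(ks))^{(1/2)(k(x−s)+t+2)} for x ∈ (0,1]. Then lim_{k→∞} f_k(x | s, t) = 0 for every x ∈ (0,1]. -/
/-!
Taking logarithms, the first five factors of `f_k` are at most `C k^B e^{G k}` with
`G = (x/2) (log (x/s) - 1) ≤ -x/2`, using `(1 + t/(kx))^{kx} ≤ e^t`. The last factor has base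
`1 - x/s - t/(ks)` and exponent `-k(s - x)/2 + O(1)`, so for large `k` it is at most `e^{t + H k}`
with `H = -((s - x)/2) log (1 - x/s)`; for `x = s` its exponent is constant and its base tends to `0`.
Since `log y < y - 1` for `y ≠ 1`, `H < x/2` when `x < s`, and `H = 0` when `x = s`, so the rate
`G + H` is negative and the exponential decay beats the polynomial factor.
-/

open Filter

/-- The function f_k(x | s, t) arising in the consistency proof for the mixture of
g-priors with the hierarchical uniform model prior. -/
noncomputable def fMix (k : ℕ) (x s : ℝ) (t : ℕ) : ℝ :=
  (k : ℝ) * ((k : ℝ) * x) ^ (-(k : ℝ) * x - 1 / 2) * ((k : ℝ) * s) ^ (-((k : ℝ) * x) / 2)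
    * Real.exp (-((k : ℝ) * x) / 2)
    * ((k : ℝ) * x + (t : ℝ)) ^ ((3 * ((k : ℝ) * x)) / 2 + (3 * (t : ℝ)) / 2 + 1 / 2)
    * (1 - ((k : ℝ) * x + (t : ℝ)) / ((k : ℝ) * s))
        ^ ((1 / 2 : ℝ) * ((k : ℝ) * (x - s) + (t : ℝ) + 2))

open Real

theorem tendsto_exp_add_mul_log_add_mul_natCast_nhds_zero (a b : ℝ) {c : ℝ} (hc : c < 0) :
    Tendsto (fun k : ℕ => exp (a + b * log k + c * k)) atTop (nhds 0) := by
  have hreal : Tendsto (fun y : ℝ => exp a * (y ^ b * exp (-(-c) * y))) atTop (nhds 0) := by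
    simpa using (tendsto_rpow_mul_exp_neg_mul_atTop_nhds_zero b (-c) (by linarith)).const_mul (exp a)
  refine (hreal.comp tendsto_natCast_atTop_atTop).congr' ?_
  filter_upwards [eventually_gt_atTop 0] with k hk
  have hk' : (0 : ℝ) < k := Nat.cast_pos.2 hk
  simp only [Function.comp_apply, neg_neg, rpow_def_of_pos hk', exp_add]
  ring_nf

theorem log_add_le_log_add_div {K t : ℝ} (hK : 0 < K) (ht : 0 ≤ t) :
    log (K + t) ≤ log K + t / K := by
  have h := log_le_sub_one_of_pos (show 0 < (K + t) / K by positivity)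
  rw [log_div (by positivity) hK.ne', add_div, div_self hK.ne'] at h
  linarith

theorem sub_rpow_sub_le_exp {b δ c d : ℝ} (hb : 0 < b) (hb1 : b ≤ 1) (hδ : 0 ≤ δ) (hδb : 2 * δ ≤ b)
    (hc : 0 ≤ c) (hd : 0 ≤ d) :
    (b - δ) ^ (d - c) ≤ exp (2 * c * δ / b - c * log b) := by
  have hbδ : 0 < b - δ := by linarith
  have hlow : log b - 2 * δ / b ≤ log (b - δ) := by
    have h := log_le_sub_one_of_pos (div_pos hb hbδ)
    rw [log_div hb.ne' hbδ.ne'] at h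
    have h' : b / (b - δ) - 1 ≤ 2 * δ / b := by
      rw [div_sub_one hbδ.ne', sub_sub_cancel, div_le_div_iff₀ hbδ hb]
      nlinarith
    linarith
  have hup : log (b - δ) ≤ 0 := log_nonpos hbδ.le (by linarith)
  rw [rpow_def_of_pos hbδ, exp_le_exp]
  linear_combination mul_le_mul_of_nonneg_left hlow hc + mul_nonpos_of_nonneg_of_nonpos hd hup

noncomputable def fMixPrefactor (k : ℕ) (x s : ℝ) (t : ℕ) : ℝ :=
  (k : ℝ) * ((k : ℝ) * x) ^ (-(k : ℝ) * x - 1 / 2) * ((k : ℝ) * s) ^ (-((k : ℝ) * x) / 2)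
    * exp (-((k : ℝ) * x) / 2)
    * ((k : ℝ) * x + (t : ℝ)) ^ ((3 * ((k : ℝ) * x)) / 2 + (3 * (t : ℝ)) / 2 + 1 / 2)

noncomputable def fMixTail (k : ℕ) (x s : ℝ) (t : ℕ) : ℝ :=
  (1 - ((k : ℝ) * x + (t : ℝ)) / ((k : ℝ) * s)) ^ ((1 / 2 : ℝ) * ((k : ℝ) * (x - s) + (t : ℝ) + 2))

theorem fMix_eq_fMixPrefactor_mul_fMixTail (k : ℕ) (x s : ℝ) (t : ℕ) :
    fMix k x s t = fMixPrefactor k x s t * fMixTail k x s t :=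
  rfl

noncomputable def fMixPrefactorRate (x s : ℝ) : ℝ := x / 2 * (log (x / s) - 1)

noncomputable def fMixTailRate (x s : ℝ) : ℝ := -((s - x) / 2) * log (1 - x / s)

theorem fMixPrefactorRate_add_fMixTailRate_neg {x s : ℝ} (hx : 0 < x) (hxs : x ≤ s) :
    fMixPrefactorRate x s + fMixTailRate x s < 0 := by
  have hs : 0 < s := hx.trans_le hxs
  rcases hxs.lt_or_eq with hxs | rfl
  · have hsx : 0 < s - x := sub_pos.2 hxs
    have hprefactor : fMixPrefactorRate x s ≤ -(x / 2) := by
      have := log_nonpos (div_pos hx hs).le ((div_le_one hs).2 hxs.le)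
      rw [fMixPrefactorRate]
      nlinarith
    have htail : fMixTailRate x s < x / 2 := by
      have hlog : log (s / (s - x)) < s / (s - x) - 1 :=
        log_lt_sub_one_of_pos (by positivity) (by rw [ne_eq, div_eq_one_iff_eq hsx.ne']; linarith)
      have hinv : log (1 - x / s) = -log (s / (s - x)) := by
        rw [← log_inv, inv_div, sub_div' hs.ne', one_mul]
      calc fMixTailRate x s = (s - x) / 2 * log (s / (s - x)) := by rw [fMixTailRate, hinv]; ring
        _ < (s - x) / 2 * (s / (s - x) - 1) := mul_lt_mul_of_pos_left hlog (half_pos hsx)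
        _ = x / 2 := by field_simp; ring
    linarith
  · rw [fMixPrefactorRate, fMixTailRate, div_self hx.ne', log_one, sub_self, zero_div, neg_zero,
      zero_mul, add_zero]
    linarith

theorem fMixPrefactor_pos {k : ℕ} {x s : ℝ} (t : ℕ) (hk : 0 < k) (hx : 0 < x) (hs : 0 < s) :
    0 < fMixPrefactor k x s t := by
  have : (0 : ℝ) < k := Nat.cast_pos.2 hk
  unfold fMixPrefactor
  positivity

theorem fMixPrefactor_le {x s : ℝ} (t : ℕ) (hx : 0 < x) (hs : 0 < s) :
    ∃ A B : ℝ, ∀ k : ℕ, 1 ≤ k →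
      fMixPrefactor k x s t ≤ exp (A + B * log k + fMixPrefactorRate x s * k) := by
  refine ⟨3 * t / 2 + (3 * t / 2 + 1 / 2) * log (x + t) - log x / 2, 1 + 3 * t / 2,
    fun k hk => ?_⟩
  have hk0 : (0 : ℝ) < k := Nat.cast_pos.2 hk
  have hk1 : (1 : ℝ) ≤ k := Nat.one_le_cast.2 hk
  have hK : 0 < (k : ℝ) * x := by positivity
  have hKt : 0 < (k : ℝ) * x + t := by positivity
  rw [← exp_log (fMixPrefactor_pos t hk hx hs), exp_le_exp]
  have hlog : log (fMixPrefactor k x s t) = log k + (-(k * x) - 1 / 2) * log (k * x)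
      - k * x / 2 * log (k * s) - k * x / 2
      + (3 * (k * x) / 2 + 3 * t / 2 + 1 / 2) * log (k * x + t) := by
    unfold fMixPrefactor
    rw [log_mul (by positivity) (by positivity), log_mul (by positivity) (by positivity),
      log_mul (by positivity) (by positivity), log_mul (by positivity) (by positivity),
      log_rpow hK, log_rpow (by positivity), log_rpow hKt, log_exp]
    ring
  have hlogK : log (k * x) = log k + log x := log_mul hk0.ne' hx.ne'
  have hlogks : log (k * s) = log k + log s := log_mul hk0.ne' hs.ne'
  have hlogxs : log (x / s) = log x - log s := log_div hx.ne' hs.ne'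
  -- of the coefficient of `log (kx + t)`, the part `3kx/2` is paid for by `log (1 + t/(kx)) ≤ t/(kx)`,
  -- the bounded rest by `kx + t ≤ k (x + t)`
  have hbulk : 3 * (k * x) / 2 * log (k * x + t) ≤ 3 * (k * x) / 2 * log (k * x) + 3 * t / 2 := by
    calc 3 * (k * x) / 2 * log (k * x + t)
        ≤ 3 * (k * x) / 2 * (log (k * x) + t / (k * x)) :=
          mul_le_mul_of_nonneg_left (log_add_le_log_add_div hK (Nat.cast_nonneg t)) (by positivity)
      _ = 3 * (k * x) / 2 * log (k * x) + 3 * t / 2 := by field_simp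
  have hrest : log (k * x + t) ≤ log k + log (x + t) := by
    rw [← log_mul hk0.ne' (by positivity)]
    exact log_le_log hKt (by nlinarith [(Nat.cast_nonneg t : (0 : ℝ) ≤ t)])
  rw [hlog, fMixPrefactorRate, hlogxs]
  linear_combination hbulk
    + mul_le_mul_of_nonneg_left hrest (by positivity : (0 : ℝ) ≤ 3 * t / 2 + 1 / 2)
    + (k * x / 2 - 1 / 2) * hlogK - k * x / 2 * hlogks

theorem norm_fMixTail_le_of_lt {x s : ℝ} (t : ℕ) (hx : 0 < x) (hxs : x < s) :
    ∀ᶠ k : ℕ in atTop, ‖fMixTail k x s t‖ ≤ exp (t + fMixTailRate x s * k) := by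
  have hs : 0 < s := hx.trans hxs
  have hsx : 0 < s - x := sub_pos.2 hxs
  filter_upwards [tendsto_natCast_atTop_atTop.eventually_ge_atTop (2 * t / (s - x)),
    eventually_gt_atTop 0] with k hk hk0
  have hk0' : (0 : ℝ) < k := Nat.cast_pos.2 hk0
  have hb : 0 < 1 - x / s := by rw [sub_pos, div_lt_one hs]; exact hxs
  have hδb : 2 * (t / (k * s)) ≤ 1 - x / s := by
    rw [div_le_iff₀ hsx] at hk
    rw [one_sub_div hs.ne', ← mul_div_assoc, div_le_div_iff₀ (by positivity) hs]
    nlinarith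
  have hbase : 1 - ((k : ℝ) * x + t) / (k * s) = (1 - x / s) - t / (k * s) := by
    field_simp; ring
  have hexp : (1 / 2 : ℝ) * (k * (x - s) + t + 2) = (t + 2) / 2 - k * (s - x) / 2 := by ring
  have h := sub_rpow_sub_le_exp hb (by linarith [div_pos hx hs]) (by positivity) hδb
    (by positivity : (0 : ℝ) ≤ k * (s - x) / 2) (by positivity : (0 : ℝ) ≤ (t + 2) / 2)
  rw [fMixTail, hbase, hexp, norm_of_nonneg (rpow_nonneg (by linarith) _)]
  refine h.trans_eq (congrArg exp ?_)
  rw [fMixTailRate, one_sub_div hs.ne']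
  field_simp
  ring

theorem norm_fMixTail_self_le_one {s : ℝ} (t : ℕ) (hs : 0 < s) :
    ∀ᶠ k : ℕ in atTop, ‖fMixTail k s s t‖ ≤ 1 := by
  filter_upwards [tendsto_natCast_atTop_atTop.eventually_ge_atTop (t / s),
    eventually_gt_atTop 0] with k hk hk0
  have hk0' : (0 : ℝ) < k := Nat.cast_pos.2 hk0
  have hbase : 1 - ((k : ℝ) * s + t) / (k * s) = -(t / (k * s)) := by field_simp; ring
  rw [fMixTail, hbase, sub_self, mul_zero, zero_add, norm_eq_abs]
  refine (abs_rpow_le_abs_rpow _ _).trans (rpow_le_one (abs_nonneg _) ?_ (by positivity))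
  rw [abs_neg, abs_of_nonneg (by positivity), div_le_one (by positivity)]
  rwa [div_le_iff₀ hs] at hk

theorem norm_fMixTail_le {x s : ℝ} (t : ℕ) (hx : 0 < x) (hxs : x ≤ s) :
    ∀ᶠ k : ℕ in atTop, ‖fMixTail k x s t‖ ≤ exp (t + fMixTailRate x s * k) := by
  rcases hxs.lt_or_eq with hxs | rfl
  · exact norm_fMixTail_le_of_lt t hx hxs
  · filter_upwards [norm_fMixTail_self_le_one t hx] with k hk
    rw [fMixTailRate, sub_self, zero_div, neg_zero, zero_mul, zero_mul, add_zero]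
    exact hk.trans (one_le_exp (Nat.cast_nonneg t))

theorem fMix_tendsto_zero (t : ℕ) (s : ℝ) (hs : 1 ≤ s) (x : ℝ)
    (hx0 : 0 < x) (hx1 : x ≤ 1) :
    Tendsto (fun k : ℕ => fMix k x s t) atTop (nhds 0) := by
  have hxs : x ≤ s := hx1.trans hs
  have hs0 : 0 < s := hx0.trans_le hxs
  obtain ⟨A, B, hprefactor⟩ := fMixPrefactor_le t hx0 hs0
  refine squeeze_zero_norm' ?_ (tendsto_exp_add_mul_log_add_mul_natCast_nhds_zero (A + t) B
    (fMixPrefactorRate_add_fMixTailRate_neg hx0 hxs))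
  filter_upwards [norm_fMixTail_le t hx0 hxs, eventually_ge_atTop 1] with k htail hk
  rw [fMix_eq_fMixPrefactor_mul_fMixTail, norm_mul,
    norm_of_nonneg (fMixPrefactor_pos t hk hx0 hs0).le]
  calc fMixPrefactor k x s t * ‖fMixTail k x s t‖
      ≤ exp (A + B * log k + fMixPrefactorRate x s * k) * exp (t + fMixTailRate x s * k) :=
        mul_le_mul (hprefactor k hk) htail (norm_nonneg _) (exp_nonneg _)
    _ = exp (A + t + B * log k + (fMixPrefactorRate x s + fMixTailRate x s) * k) := by
        rw [← exp_add]; ring_nf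
end

section
/- For r > 1, define δ_mix(r) = (1 − 1/r)(e·r)^{1/(r−1)} − 1 and δ_IP(r) = (r−1)/(r+1)^{(r−1)/r} − 1. Then δ_IP(r) < δ_mix(r) for all r > 1. -/
/-! Replacing `r + 1` by `r` in the denominator of δ_IP only increases it, and turns it into
`(1 - 1/r) r^(1/r) - 1`. This is below δ_mix because `r^(1/r) < r^(1/(r-1)) < (e r)^(1/(r-1))`. -/

open Real

lemma sub_one_div_rpow_sub_one_div_self {r : ℝ} (hr : 0 < r) :
    (r - 1) / r ^ ((r - 1) / r) = (1 - 1 / r) * r ^ (1 / r) := by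
  have hexp : (r - 1) / r = 1 - 1 / r := by field_simp
  rw [hexp, rpow_sub hr, rpow_one]
  field_simp

lemma rpow_one_div_lt_exp_one_mul_rpow {r : ℝ} (hr : 1 < r) :
    r ^ (1 / r) < (exp 1 * r) ^ (1 / (r - 1)) := by
  have hr0 : 0 < r := by linarith
  calc r ^ (1 / r) < r ^ (1 / (r - 1)) :=
        rpow_lt_rpow_of_exponent_lt hr (one_div_lt_one_div_of_lt (sub_pos.mpr hr) (sub_one_lt r))
    _ < (exp 1 * r) ^ (1 / (r - 1)) := by
        have : 0 < 1 / (r - 1) := one_div_pos.mpr (sub_pos.mpr hr)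
        gcongr
        exact lt_mul_left hr0 (one_lt_exp_iff.mpr one_pos)

/-- The inconsistency threshold for the intrinsic priors is strictly smaller than
that for the mixture of g-priors: δ_IP(r) < δ_mix(r) for all r > 1. -/
theorem delta_IP_lt_delta_mix (r : ℝ) (hr : 1 < r) :
    (r - 1) / (r + 1) ^ ((r - 1) / r) - 1
      < (1 - 1 / r) * (Real.exp 1 * r) ^ (1 / (r - 1)) - 1 := by
  have hr0 : 0 < r := by linarith
  calc (r - 1) / (r + 1) ^ ((r - 1) / r) - 1 < (r - 1) / r ^ ((r - 1) / r) - 1 := by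
        have : 0 < (r - 1) / r := div_pos (sub_pos.mpr hr) hr0
        gcongr
        exact lt_add_one r
    _ = (1 - 1 / r) * r ^ (1 / r) - 1 := by rw [sub_one_div_rpow_sub_one_div_self hr0]
    _ < (1 - 1 / r) * (exp 1 * r) ^ (1 / (r - 1)) - 1 := by
        have : 0 < 1 - 1 / r := sub_pos.mpr ((div_lt_one hr0).mpr hr)
        gcongr
        exact rpow_one_div_lt_exp_one_mul_rpow hr
end
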